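/- arXiv:1910.12036 — 2 statements merged into one kernel-verified Lean document; each statement's English description precedes it below -/
import Mathlib

section
/- Let q be a power of a prime p, N > 1 a divisor of q−1, α a primitive element of F_q, β = α^((q−1)/N), ψ(x) = ζ_p^(Tr(x)), ζ_N = e^(2πi/N), and χ the multiplicative character of F_q^* determined by χ(α) = ζ_N. Set G(χ^j) = Σ_{x ∈ F_q^*} χ(x)^j ψ(x) for 1 ≤ j ≤ N−1, and set G(χ^0) = −1. Then for every b ∈ F_q^* and every integer k with b^((q−1)/N) = β^k, Σ_{x ∈ F_q} ζ_p^(Tr(x^((q−1)/N)) + Tr(bx)) = 1 + (1/N)·Σ_{i=0}^{N−1} ψ(β^(i−k)) Σ_{j=0}^{N−1} ζ_N^(−ij) G(χ^j). -/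
theorem stmt4
    (p : ℕ) (hp : p.Prime)
    (F : Type) [Field F] [Fintype F] [DecidableEq F] [Algebra (ZMod p) F]
    (N : ℕ) (hN : 1 < N) (hNdvd : N ∣ Fintype.card F - 1)
    (α : Fˣ) (hα : ∀ x : Fˣ, x ∈ Subgroup.zpowers α)
    (β : Fˣ) (hβ : β = α ^ ((Fintype.card F - 1) / N))
    (ζp : ℂ) (hζp : ζp = Complex.exp (2 * Real.pi * Complex.I / (p : ℂ)))
    (ζN : ℂ) (hζN : ζN = Complex.exp (2 * Real.pi * Complex.I / (N : ℂ)))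
    (ψ : F → ℂ) (hψ : ∀ x : F, ψ x = ζp ^ (Algebra.trace (ZMod p) F x).val)
    (χ : Fˣ → ℂ) (hχmul : ∀ x y : Fˣ, χ (x * y) = χ x * χ y) (hχα : χ α = ζN)
    (G : ℕ → ℂ) (hG0 : G 0 = -1)
    (hG : ∀ j : ℕ, 1 ≤ j → j ≤ N - 1 → G j = ∑ x : Fˣ, (χ x) ^ j * ψ (x : F))
    (b : Fˣ) (k : ℤ) (hk : b ^ ((Fintype.card F - 1) / N) = β ^ k) :
    ∑ x : F, ζp ^ ((Algebra.trace (ZMod p) F (x ^ ((Fintype.card F - 1) / N)) +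
        Algebra.trace (ZMod p) F ((b : F) * x)).val) =
      1 + (1 / (N : ℂ)) * ∑ i ∈ Finset.range N,
        ψ ((β ^ ((i : ℤ) - k) : Fˣ) : F) *
          ∑ j ∈ Finset.range N, ζN ^ (-((i : ℤ) * (j : ℤ))) * G j := by
  classical
  haveI hpf : Fact p.Prime := ⟨hp⟩
  set q := Fintype.card F with hq
  set d := (q - 1) / N with hd
  have hq1 : 1 < q := Fintype.one_lt_card
  have hNd : N * d = q - 1 := Nat.mul_div_cancel' hNdvd
  have hN0 : 0 < N := by omega
  have hd0 : 0 < d := by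
    rcases Nat.eq_zero_or_pos d with h | h
    · rw [h, mul_zero] at hNd; omega
    · exact h
  have hNC : (N : ℂ) ≠ 0 := Nat.cast_ne_zero.mpr (by omega)
  -- primitive roots
  have hprimp : IsPrimitiveRoot ζp p := by
    rw [hζp]; exact Complex.isPrimitiveRoot_exp p hp.ne_zero
  have hprimN : IsPrimitiveRoot ζN N := by
    rw [hζN]; exact Complex.isPrimitiveRoot_exp N (by omega)
  have hζN0 : ζN ≠ 0 := by rw [hζN]; exact Complex.exp_ne_zero _
  -- ψ is additive
  have hζpp : ζp ^ p = 1 := hprimp.pow_eq_one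
  have hζpmod : ∀ a : ℕ, ζp ^ (a % p) = ζp ^ a := by
    intro a
    conv_rhs => rw [← Nat.mod_add_div a p]
    rw [pow_add, pow_mul, hζpp, one_pow, mul_one]
  have hψadd : ∀ x y : F, ψ (x + y) = ψ x * ψ y := by
    intro x y
    rw [hψ, hψ, hψ, ← pow_add, map_add, ZMod.val_add, hζpmod]
  have hψ0 : ψ 0 = 1 := by
    rw [hψ]
    simp
  -- splitting sums over F into 0 and units
  have hsplit : ∀ f : F → ℂ, ∑ x : F, f x = f 0 + ∑ v : Fˣ, f v := by
    intro f
    rw [← Finset.sum_erase_add Finset.univ f (Finset.mem_univ 0), add_comm]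
    congr 1
    refine (Finset.sum_bij (fun (v : Fˣ) _ => (v : F)) ?_ ?_ ?_ ?_).symm
    · intro v _; simp [Units.ne_zero v]
    · intro v _ w _ h; exact Units.ext h
    · intro x hx
      simp only [Finset.mem_erase, Finset.mem_univ, and_true] at hx
      exact ⟨Units.mk0 x hx, Finset.mem_univ _, rfl⟩
    · intro v _; rfl
  -- sum of ψ over F is 0
  haveI : Algebra.IsSeparable (ZMod p) F := by
    haveI : Algebra.IsAlgebraic (ZMod p) F := Algebra.IsAlgebraic.of_finite _ _
    infer_instance
  have hsum0 : ∑ x : F, ψ x = 0 := by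
    obtain ⟨a, ha⟩ := Algebra.trace_surjective (ZMod p) F 1
    have hψa : ψ a = ζp := by
      rw [hψ, ha, ZMod.val_one, pow_one]
    have hre : ∑ x : F, ψ (x + a) = ∑ x : F, ψ x :=
      Fintype.sum_equiv (Equiv.addRight a) _ _ (fun x => rfl)
    have h2 : ψ a * ∑ x : F, ψ x = ∑ x : F, ψ x := by
      rw [Finset.mul_sum, ← hre]
      exact Finset.sum_congr rfl fun x _ => by rw [hψadd, mul_comm]
    by_contra hne
    have h3 : ψ a = 1 := by
      have h4 : (ψ a - 1) * ∑ x : F, ψ x = 0 := by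
        rw [sub_mul, one_mul, h2, sub_self]
      rcases mul_eq_zero.mp h4 with h | h
      · linear_combination h
      · exact absurd h hne
    rw [hψa] at h3
    exact hprimp.ne_one hp.one_lt h3
  have hsumU : ∑ v : Fˣ, ψ (v : F) = -1 := by
    have h := hsplit ψ
    rw [hsum0, hψ0] at h
    linear_combination -h
  -- orders
  have hordα : orderOf α = q - 1 := by
    have h := orderOf_eq_card_of_forall_mem_zpowers hα
    rwa [Nat.card_eq_fintype_card, Fintype.card_units] at h
  have hddvd : d ∣ q - 1 := ⟨N, by rw [← hNd, mul_comm]⟩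
  have hordβ : orderOf β = N := by
    rw [hβ, orderOf_pow, hordα, Nat.gcd_eq_right hddvd]
    exact Nat.div_eq_of_eq_mul_left hd0 hNd.symm
  -- discrete log
  have hmex : ∀ v : Fˣ, ∃ mm : ℕ, α ^ mm = v := by
    intro v
    have h := (mem_powers_iff_mem_zpowers).mpr (hα v)
    exact (Submonoid.mem_powers_iff _ _).mp h
  set m : Fˣ → ℕ := fun v => (hmex v).choose with hmdef
  have hm : ∀ v : Fˣ, α ^ m v = v := fun v => (hmex v).choose_spec
  -- χ values
  have hχ1 : χ 1 = 1 := by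
    have h := hχmul α 1
    rw [mul_one, hχα] at h
    have h2 : ζN * χ 1 = ζN * 1 := by rw [mul_one]; exact h.symm
    exact mul_left_cancel₀ hζN0 h2
  have hχpow : ∀ n : ℕ, χ (α ^ n) = ζN ^ n := by
    intro n
    induction n with
    | zero => simpa using hχ1
    | succ n ih => rw [pow_succ, pow_succ, hχmul, ih, hχα]
  have hχv : ∀ v : Fˣ, χ v = ζN ^ m v := by
    intro v
    conv_lhs => rw [← hm v]
    rw [hχpow]
  -- v^d = β^(m v % N)
  have hvd : ∀ v : Fˣ, v ^ d = β ^ (m v % N) := by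
    intro v
    conv_lhs => rw [← hm v]
    rw [← pow_mul, mul_comm, pow_mul, ← hβ]
    conv_rhs => rw [← hordβ]
    exact (pow_mod_orderOf β (m v)).symm
  -- G on range N
  have hGall : ∀ j ∈ Finset.range N, G j = ∑ v : Fˣ, χ v ^ j * ψ (v : F) := by
    intro j hj
    rw [Finset.mem_range] at hj
    rcases Nat.eq_zero_or_pos j with h | h
    · subst h
      simp only [pow_zero, one_mul, hsumU, hG0]
    · exact hG j h (by omega)
  -- geometric sum
  have hgeo : ∀ z : ℂ, z ^ N = 1 → ∑ j ∈ Finset.range N, z ^ j =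
      if z = 1 then (N : ℂ) else 0 := by
    intro z hz
    by_cases h1 : z = 1
    · simp [h1]
    · rw [if_neg h1, geom_sum_eq h1, hz, sub_self, zero_div]
  -- power juggling
  have hz : ∀ (a i j : ℕ), ζN ^ (-((i : ℤ) * (j : ℤ))) * (ζN ^ a) ^ j
      = (ζN ^ ((a : ℤ) - (i : ℤ))) ^ j := by
    intro a i j
    rw [← pow_mul, ← zpow_natCast ζN (a * j), ← zpow_natCast (ζN ^ ((a : ℤ) - (i : ℤ))) j,
      ← zpow_mul, ← zpow_add₀ hζN0]
    congr 1
    push_cast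
    ring
  -- key inner-sum identity
  have key : ∀ i ∈ Finset.range N,
      ∑ j ∈ Finset.range N, ζN ^ (-((i : ℤ) * (j : ℤ))) * G j =
        (N : ℂ) * ∑ v ∈ Finset.univ.filter (fun v : Fˣ => m v % N = i), ψ (v : F) := by
    intro i hi
    rw [Finset.mem_range] at hi
    have hdvd_iff : ∀ v : Fˣ, (((N : ℤ) ∣ (m v : ℤ) - (i : ℤ)) ↔ m v % N = i) := by
      intro v
      rw [← Nat.modEq_iff_dvd]
      unfold Nat.ModEq
      rw [Nat.mod_eq_of_lt hi]
      exact eq_comm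
    calc ∑ j ∈ Finset.range N, ζN ^ (-((i : ℤ) * (j : ℤ))) * G j
        = ∑ j ∈ Finset.range N, ∑ v : Fˣ,
            (ζN ^ ((m v : ℤ) - (i : ℤ))) ^ j * ψ (v : F) := by
          refine Finset.sum_congr rfl fun j hj => ?_
          rw [hGall j hj, Finset.mul_sum]
          refine Finset.sum_congr rfl fun v _ => ?_
          rw [hχv, ← mul_assoc, hz]
      _ = ∑ v : Fˣ, ψ (v : F) * ∑ j ∈ Finset.range N, (ζN ^ ((m v : ℤ) - (i : ℤ))) ^ j := by
          rw [Finset.sum_comm]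
          refine Finset.sum_congr rfl fun v _ => ?_
          rw [Finset.mul_sum]
          exact Finset.sum_congr rfl fun j _ => by ring
      _ = ∑ v : Fˣ, ψ (v : F) * (if m v % N = i then (N : ℂ) else 0) := by
          refine Finset.sum_congr rfl fun v _ => ?_
          congr 1
          rw [hgeo _ (by
            rw [← zpow_natCast (ζN ^ ((m v : ℤ) - (i : ℤ))) N, ← zpow_mul, mul_comm, zpow_mul,
              zpow_natCast, hprimN.pow_eq_one, one_zpow])]
          simp only [hprimN.zpow_eq_one_iff_dvd, hdvd_iff v]
      _ = (N : ℂ) * ∑ v ∈ Finset.univ.filter (fun v : Fˣ => m v % N = i), ψ (v : F) := by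
          rw [Finset.mul_sum, Finset.sum_filter]
          refine Finset.sum_congr rfl fun v _ => ?_
          by_cases h : m v % N = i <;> simp [h, mul_comm]
  -- now the main computation
  have hterm : ∀ x : F, ζp ^ ((Algebra.trace (ZMod p) F (x ^ d) +
      Algebra.trace (ZMod p) F ((b : F) * x)).val) = ψ (x ^ d) * ψ ((b : F) * x) := by
    intro x
    rw [← hψadd, hψ, map_add]
  calc ∑ x : F, ζp ^ ((Algebra.trace (ZMod p) F (x ^ d) +
        Algebra.trace (ZMod p) F ((b : F) * x)).val)
      = ∑ x : F, ψ (x ^ d) * ψ ((b : F) * x) :=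
        Finset.sum_congr rfl fun x _ => hterm x
    _ = ψ ((0 : F) ^ d) * ψ ((b : F) * 0) + ∑ v : Fˣ, ψ ((v : F) ^ d) * ψ ((b : F) * v) :=
        hsplit _
    _ = 1 + ∑ v : Fˣ, ψ ((v : F) ^ d) * ψ ((b : F) * v) := by
        rw [zero_pow (by omega : d ≠ 0), mul_zero, hψ0, one_mul]
    _ = 1 + ∑ v : Fˣ, ψ ((β ^ (-k) * v ^ d : Fˣ) : F) * ψ (v : F) := by
        congr 1
        refine Fintype.sum_equiv (Equiv.mulLeft b) _ _ fun v => ?_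
        have h1 : (Equiv.mulLeft b) v = b * v := rfl
        rw [h1]
        have e1 : β ^ (-k) * (b * v) ^ d = v ^ d := by
          rw [mul_pow, hk, ← mul_assoc, zpow_neg, inv_mul_cancel, one_mul]
        rw [e1, Units.val_mul, Units.val_pow_eq_pow_val]
    _ = 1 + ∑ i ∈ Finset.range N, ∑ v ∈ Finset.univ.filter (fun v : Fˣ => m v % N = i),
          ψ ((β ^ (-k) * v ^ d : Fˣ) : F) * ψ (v : F) := by
        congr 1
        exact (Finset.sum_fiberwise_of_maps_to
          (fun v _ => Finset.mem_range.mpr (Nat.mod_lt _ hN0)) _).symm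
    _ = 1 + ∑ i ∈ Finset.range N, ψ ((β ^ ((i : ℤ) - k) : Fˣ) : F) *
          ∑ v ∈ Finset.univ.filter (fun v : Fˣ => m v % N = i), ψ (v : F) := by
        congr 1
        refine Finset.sum_congr rfl fun i hi => ?_
        rw [Finset.mul_sum]
        refine Finset.sum_congr rfl fun v hv => ?_
        simp only [Finset.mem_filter] at hv
        have : β ^ (-k) * v ^ d = β ^ ((i : ℤ) - k) := by
          rw [hvd v, hv.2, ← zpow_natCast β i, ← zpow_add, ← sub_eq_neg_add]
        rw [this]
    _ = 1 + (1 / (N : ℂ)) * ∑ i ∈ Finset.range N,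
          ψ ((β ^ ((i : ℤ) - k) : Fˣ) : F) *
            ∑ j ∈ Finset.range N, ζN ^ (-((i : ℤ) * (j : ℤ))) * G j := by
        congr 1
        rw [Finset.mul_sum]
        refine Finset.sum_congr rfl fun i hi => ?_
        rw [key i hi]
        field_simp
end

section
/- Let l be a prime with l ≡ 3 (mod 4), l ≠ 3, let p be a prime whose multiplicative order modulo l² equals l(l−1)/2, and let h be the class number of Q(√−l) (h is odd, so e := (l−1+2h)/4 ∈ ℤ). Assume 1 + l = 4p^h. If a, b are integers with a² + l·b² = 4p^h and a ≡ −2p^e (mod l), then b² = 1, and a = 1 if l ≡ 3 (mod 8) while a = −1 if l ≡ 7 (mod 8). -/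
theorem stmt19
    (p l : ℕ) (hp : p.Prime) (hl : l.Prime) (hl4 : l % 4 = 3) (hlne : l ≠ 3)
    (hord : orderOf (p : ZMod (l ^ 2)) = l * (l - 1) / 2)
    (K : Type) [Field K] [NumberField K]
    (s : K) (hs : s ^ 2 = -(l : K))
    (hgen : ∀ x : K, ∃ u v : ℚ, x = (u : K) + (v : K) * s)
    (hcl : 1 + l = 4 * p ^ NumberField.classNumber K)
    (a b : ℤ)
    (hab : a ^ 2 + (l : ℤ) * b ^ 2 = 4 * (p : ℤ) ^ NumberField.classNumber K)
    (hcong : (a : ZMod l) = -2 * (p : ZMod l) ^ ((l - 1 + 2 * NumberField.classNumber K) / 4)) :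
    b ^ 2 = 1 ∧ (l % 8 = 3 → a = 1) ∧ (l % 8 = 7 → a = -1) := by
  classical
  set h := NumberField.classNumber K with hh
  set E := (l - 1 + 2 * h) / 4 with hE
  have hl7 : 7 ≤ l := by omega
  haveI : Fact l.Prime := ⟨hl⟩
  set P : ZMod l := (p : ZMod l) with hPdef
  set m := (l - 1) / 2 with hm
  -- P ≠ 0
  have hP0 : P ≠ 0 := by
    intro h0
    have hdvd : l ∣ p := (ZMod.natCast_eq_zero_iff p l).mp h0
    have hpl : l = p := (Nat.prime_dvd_prime_iff_eq hl hp).mp hdvd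
    have hx2 : ((p : ZMod (l ^ 2))) ^ 2 = 0 := by
      rw [← hpl, ← Nat.cast_pow, ZMod.natCast_self]
    have hmul : 42 ≤ l * (l - 1) := by
      calc 42 = 7 * 6 := by norm_num
      _ ≤ l * (l - 1) := Nat.mul_le_mul hl7 (by omega)
    have h1 : ((p : ZMod (l ^ 2))) ^ (l * (l - 1) / 2) = 1 := by
      rw [← hord]; exact pow_orderOf_eq_one _
    rw [show l * (l - 1) / 2 = 2 + (l * (l - 1) / 2 - 2) by omega, pow_add, hx2,
      zero_mul] at h1
    haveI : Fact (1 < l ^ 2) := ⟨by nlinarith⟩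
    exact one_ne_zero h1.symm
  -- order of P
  have hlm : l * (l - 1) / 2 = l * m := by
    have h2m : l - 1 = 2 * m := by omega
    calc l * (l - 1) / 2 = l * m * 2 / 2 := by rw [h2m]; ring_nf
    _ = l * m := Nat.mul_div_cancel _ two_pos
  have hd1 : orderOf P ∣ l * m := by
    have hdd : l ∣ l ^ 2 := dvd_pow_self l two_ne_zero
    have := orderOf_map_dvd (ZMod.castHom hdd (ZMod l)).toMonoidHom ((p : ℕ) : ZMod (l ^ 2))
    simp only [RingHom.toMonoidHom_eq_coe, MonoidHom.coe_coe, map_natCast] at this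
    rw [hord, hlm] at this
    exact this
  have hd2 : orderOf P ∣ 2 * m := by
    have := orderOf_dvd_of_pow_eq_one (ZMod.pow_card_sub_one_eq_one hP0)
    rwa [show l - 1 = 2 * m by omega] at this
  have hdm : orderOf P ∣ m := by
    have hco : Nat.gcd l 2 = 1 := (Nat.coprime_primes hl Nat.prime_two).mpr (by omega)
    have := Nat.dvd_gcd hd1 hd2
    rwa [Nat.gcd_mul_right, hco, one_mul] at this
  have hmd : m ∣ orderOf P := by
    have hpd : (p : ZMod l) ^ orderOf P = 1 := pow_orderOf_eq_one P
    have h0 : (((p : ℤ) ^ orderOf P - 1 : ℤ) : ZMod l) = 0 := by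
      push_cast
      rw [hpd]
      ring
    have hz : (l : ℤ) ∣ (p : ℤ) ^ orderOf P - 1 :=
      (ZMod.intCast_zmod_eq_zero_iff_dvd _ _).mp h0
    have hz2 := dvd_sub_pow_of_dvd_sub hz 1
    simp only [pow_one, one_pow, ← pow_mul] at hz2
    have h0' : (((p : ℤ) ^ (orderOf P * l) - 1 : ℤ) : ZMod (l ^ 2)) = 0 := by
      rw [ZMod.intCast_zmod_eq_zero_iff_dvd]
      exact_mod_cast hz2
    have hone : ((p : ZMod (l ^ 2))) ^ (orderOf P * l) = 1 := by
      push_cast at h0'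
      linear_combination h0'
    have hdvd := orderOf_dvd_of_pow_eq_one hone
    rw [hord, hlm] at hdvd
    have hml : m * l ∣ orderOf P * l := by rwa [mul_comm l m] at hdvd
    exact (Nat.mul_dvd_mul_iff_right (show 0 < l by omega)).mp hml
  have hdeq : orderOf P = m := Nat.dvd_antisymm hdm hmd
  have hPm : P ^ m = 1 := by rw [← hdeq]; exact pow_orderOf_eq_one _
  -- P^E is a square
  set y := P ^ ((m + 1) / 2) with hy
  have hyy : y * y = P := by
    rw [hy, ← pow_add, show (m + 1) / 2 + (m + 1) / 2 = m + 1 by omega, pow_succ, hPm, one_mul]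
  set x := y ^ E with hx
  have hxx : x * x = P ^ E := by rw [hx, ← mul_pow, hyy]
  have hx0 : x ≠ 0 := by
    intro h0
    have hc := hxx
    rw [h0, mul_zero] at hc
    exact pow_ne_zero E hP0 hc.symm
  -- arithmetic
  have hclZ : (1 : ℤ) + l = 4 * (p : ℤ) ^ h := by exact_mod_cast hcl
  have hab' : a ^ 2 + (l : ℤ) * b ^ 2 = 1 + l := by rw [hab]; linarith
  have hlZ : (7 : ℤ) ≤ l := by exact_mod_cast hl7
  have hb01 : b ^ 2 = 0 ∨ b ^ 2 = 1 := by
    have h0 : 0 ≤ b ^ 2 := sq_nonneg b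
    have h1 : b ^ 2 ≤ 1 := by nlinarith [sq_nonneg a]
    rcases lt_or_eq_of_le h0 with hlt | heq
    · right; exact le_antisymm h1 hlt
    · left; exact heq.symm
  have hl2ne : l ≠ 2 := by omega
  have hs2 : 2 * P ^ E = 1 → IsSquare (2 : ZMod l) := by
    intro hq
    refine ⟨x⁻¹, ?_⟩
    field_simp
    linear_combination 2 * hxx + hq
  have hs2' : 2 * P ^ E = 1 → l % 8 = 3 → False := by
    intro hq h8
    have := (ZMod.exists_sq_eq_two_iff hl2ne).mp (hs2 hq)
    omega
  have hsneg : 2 * P ^ E = -1 → l % 8 = 7 → False := by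
    intro hq h8
    obtain ⟨z, hz⟩ := (ZMod.exists_sq_eq_two_iff hl2ne).mpr (Or.inr h8)
    have hneg : IsSquare (-1 : ZMod l) := by
      refine ⟨z * x, ?_⟩
      linear_combination (x * x) * hz - 2 * hxx - hq
    exact (ZMod.exists_sq_eq_neg_one_iff (p := l)).mp hneg hl4
  rcases hb01 with hb0 | hb1
  · -- b² = 0 : contradiction
    exfalso
    have ha2 : a ^ 2 = 1 + l := by rw [hb0, mul_zero, add_zero] at hab'; exact hab'
    have h4ne : (4 : ZMod l) ≠ 0 := by
      have h4 : ((4 : ℕ) : ZMod l) ≠ 0 := by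
        rw [Ne, ZMod.natCast_eq_zero_iff]
        intro hdvd
        have := Nat.le_of_dvd (by norm_num) hdvd
        omega
      simpa using h4
    have h4p : (4 : ZMod l) * P ^ h = 1 := by
      have hc := congrArg (Nat.cast : ℕ → ZMod l) hcl
      push_cast at hc
      rw [ZMod.natCast_self] at hc
      linear_combination -hc
    have haz : ((a : ZMod l)) ^ 2 = 1 := by
      have hc := congrArg (Int.cast : ℤ → ZMod l) ha2
      push_cast at hc
      rw [ZMod.natCast_self] at hc
      simpa using hc
    have h2E : (4 : ZMod l) * P ^ (2 * E) = 1 := by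
      rw [hcong] at haz
      rw [two_mul, pow_add]
      linear_combination haz
    have hPP : P ^ (2 * E) = P ^ h := mul_left_cancel₀ h4ne (by rw [h2E, h4p])
    by_cases hpar : h % 2 = 0
    · have h2e : 2 * E = (l - 3) / 2 + h := by omega
      rw [h2e, pow_add] at hPP
      have hone : P ^ ((l - 3) / 2) = 1 :=
        mul_right_cancel₀ (pow_ne_zero h hP0) (hPP.trans (one_mul (P ^ h)).symm)
      have hdvd := orderOf_dvd_of_pow_eq_one hone
      rw [hdeq] at hdvd
      have := Nat.le_of_dvd (by omega) hdvd
      omega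
    · have ha4 : a ^ 2 = 4 * (p : ℤ) ^ h := by
        have hc := hab
        rw [hb0, mul_zero, add_zero] at hc
        exact hc
      have haeven : (2 : ℤ) ∣ a :=
        Int.prime_two.dvd_of_dvd_pow (n := 2) ⟨2 * (p : ℤ) ^ h, by linarith⟩
      obtain ⟨c, hc⟩ := haeven
      have hc2 : c ^ 2 = (p : ℤ) ^ h := by
        have : a ^ 2 = 4 * c ^ 2 := by rw [hc]; ring
        linarith
      have hcn : c.natAbs ^ 2 = p ^ h := by
        have h1 := congrArg Int.natAbs hc2
        rwa [Int.natAbs_pow, Int.natAbs_pow, Int.natAbs_natCast] at h1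
      have hfac := congrArg (fun n => n.factorization p) hcn
      simp [Nat.factorization_pow, hp.factorization] at hfac
      omega
  · have ha2 : a ^ 2 = 1 := by
      rw [hb1, mul_one] at hab'
      linarith
    have ha : a = 1 ∨ a = -1 := by
      rcases mul_eq_zero.mp (show (a - 1) * (a + 1) = 0 by nlinarith) with h1 | h1
      · left; omega
      · right; omega
    refine ⟨hb1, ?_, ?_⟩
    · intro h8
      rcases ha with h1 | h1
      · exact h1
      · exfalso
        rw [h1] at hcong
        push_cast at hcong
        exact hs2' (by linear_combination hcong) h8
    · intro h8
      rcases ha with h1 | h1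
      · exfalso
        rw [h1] at hcong
        push_cast at hcong
        exact hsneg (by linear_combination hcong) h8
      · exact h1
end
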